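/- (Weak law of large numbers for triangular arrays of row-wise exchangeable random variables.) Let kₙ → ∞ and for each n let X_{1,n}, …, X_{kₙ,n} be real square-integrable, row-wise exchangeable random variables; set ρₙ := E[X_{1,n} X_{2,n}] (so E[X_{i,n} X_{j,n}] = ρₙ for all i ≠ j) and assume E[X_{1,n}²] ≤ Γ for some finite Γ and all n. Let (a_{i,n}) be real numbers such that limₙ Σ_{i=1}^{kₙ} a_{i,n}² = 0 and limₙ |ρₙ| · (Σ_{i=1}^{kₙ} |a_{i,n}|)² = 0. Then Σ_{i=1}^{kₙ} a_{i,n} X_{i,n} → 0 in probability as n → ∞. -/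

import Mathlib

open MeasureTheory Filter Set

/-!
By Chebyshev's inequality it suffices that the second moment of `Sₙ = ∑ᵢ a_{i,n} X_{i,n}` tends
to zero. Expanding the square, the diagonal terms contribute at most `(Γ + |ρₙ|) ∑ᵢ a_{i,n}²` and,
since all off-diagonal cross moments equal `ρₙ`, the rest is `ρₙ (∑ᵢ a_{i,n})²`. Both are bounded
by the two quantities assumed to vanish, using `∑ᵢ a_{i,n}² ≤ (∑ᵢ |a_{i,n}|)²`.
-/

section Algebra

variable {ι : Type*} [Fintype ι]

lemma sum_sq_le_sq_sum_abs (c : ι → ℝ) : ∑ i, c i ^ 2 ≤ (∑ i, |c i|) ^ 2 := by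
  simpa only [sq_abs] using
    Finset.sum_sq_le_sq_sum_of_nonneg (s := Finset.univ) fun i _ => abs_nonneg (c i)

lemma sum_sum_mul_mul_eq_of_offDiag_eq (c : ι → ℝ) {E : ι → ι → ℝ} {ρ : ℝ}
    (hE : ∀ i j, i ≠ j → E i j = ρ) :
    ∑ i, ∑ j, c i * c j * E i j = ∑ i, c i ^ 2 * (E i i - ρ) + ρ * (∑ i, c i) ^ 2 := by
  classical
  have hrow : ∀ i, ∑ j, c i * c j * E i j = c i ^ 2 * (E i i - ρ) + ∑ j, c i * c j * ρ := by
    intro i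
    rw [← Finset.add_sum_erase _ _ (Finset.mem_univ i),
      ← Finset.add_sum_erase _ _ (Finset.mem_univ i),
      Finset.sum_congr rfl fun j hj => by rw [hE i j (Finset.ne_of_mem_erase hj).symm]]
    ring
  simp_rw [hrow, Finset.sum_add_distrib, sq, Finset.sum_mul_sum, Finset.mul_sum]
  congr 1
  exact Finset.sum_congr rfl fun i _ => Finset.sum_congr rfl fun j _ => by ring

lemma sum_sum_mul_mul_le_of_offDiag_eq (c : ι → ℝ) {E : ι → ι → ℝ} {ρ Γ : ℝ}
    (hdiag : ∀ i, E i i ≤ Γ) (hE : ∀ i j, i ≠ j → E i j = ρ) :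
    ∑ i, ∑ j, c i * c j * E i j ≤ Γ * ∑ i, c i ^ 2 + 2 * (|ρ| * (∑ i, |c i|) ^ 2) := by
  have hdiag_part : ∑ i, c i ^ 2 * (E i i - ρ) ≤ (Γ + |ρ|) * ∑ i, c i ^ 2 := by
    rw [Finset.mul_sum]
    refine Finset.sum_le_sum fun i _ => ?_
    have : E i i - ρ ≤ Γ + |ρ| := by linarith [hdiag i, neg_abs_le ρ]
    nlinarith [sq_nonneg (c i)]
  have hoff_part : ρ * (∑ i, c i) ^ 2 ≤ |ρ| * (∑ i, |c i|) ^ 2 := by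
    calc ρ * (∑ i, c i) ^ 2 ≤ |ρ| * |∑ i, c i| ^ 2 := by
          rw [sq_abs]; exact mul_le_mul_of_nonneg_right (le_abs_self ρ) (sq_nonneg _)
      _ ≤ |ρ| * (∑ i, |c i|) ^ 2 := by
          gcongr; exact Finset.abs_sum_le_sum_abs _ _
  have hsq := mul_le_mul_of_nonneg_left (sum_sq_le_sq_sum_abs c) (abs_nonneg ρ)
  rw [sum_sum_mul_mul_eq_of_offDiag_eq c hE]
  linarith

end Algebra

section Moments

variable {Ω ι : Type*} [MeasurableSpace Ω] {μ : Measure Ω} [Fintype ι] {Y : ι → Ω → ℝ}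

lemma integral_sq_sum_mul_eq (hY : ∀ i, MemLp (Y i) 2 μ) (c : ι → ℝ) :
    ∫ ω, (∑ i, c i * Y i ω) ^ 2 ∂μ = ∑ i, ∑ j, c i * c j * ∫ ω, Y i ω * Y j ω ∂μ := by
  have hint : ∀ i j, Integrable (fun ω => c i * c j * (Y i ω * Y j ω)) μ :=
    fun i j => ((hY i).integrable_mul (hY j)).const_mul _
  have hexpand : ∀ ω, (∑ i, c i * Y i ω) ^ 2 = ∑ i, ∑ j, c i * c j * (Y i ω * Y j ω) := by
    intro ω
    rw [sq, Finset.sum_mul_sum]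
    exact Finset.sum_congr rfl fun i _ => Finset.sum_congr rfl fun j _ => by ring
  simp_rw [hexpand]
  rw [integral_finsetSum _ fun i _ => integrable_finsetSum _ fun j _ => hint i j]
  refine Finset.sum_congr rfl fun i _ => ?_
  rw [integral_finsetSum _ fun j _ => hint i j]
  exact Finset.sum_congr rfl fun j _ => integral_const_mul _ _

lemma integral_sq_sum_mul_le (hY : ∀ i, MemLp (Y i) 2 μ) {Γ ρ : ℝ}
    (hdiag : ∀ i, ∫ ω, Y i ω ^ 2 ∂μ ≤ Γ)
    (hoff : ∀ i j, i ≠ j → ∫ ω, Y i ω * Y j ω ∂μ = ρ) (c : ι → ℝ) :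
    ∫ ω, (∑ i, c i * Y i ω) ^ 2 ∂μ ≤ Γ * ∑ i, c i ^ 2 + 2 * (|ρ| * (∑ i, |c i|) ^ 2) := by
  rw [integral_sq_sum_mul_eq hY]
  refine sum_sum_mul_mul_le_of_offDiag_eq c (fun i => ?_) hoff
  simpa only [← sq] using hdiag i

end Moments

lemma measure_lt_abs_le_ofReal_integral_sq_div {Ω : Type*} [MeasurableSpace Ω] {μ : Measure Ω}
    {f : Ω → ℝ} (hf : Integrable (fun ω => f ω ^ 2) μ) {η : ℝ} (hη : 0 < η) :
    μ {ω | η < |f ω|} ≤ ENNReal.ofReal ((∫ ω, f ω ^ 2 ∂μ) / η ^ 2) := by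
  have hsub : {ω | η < |f ω|} ⊆ {ω | ENNReal.ofReal (η ^ 2) ≤ ENNReal.ofReal (f ω ^ 2)} := by
    intro ω hω
    rw [mem_ofPred_eq, ← sq_abs (f ω)]
    exact ENNReal.ofReal_le_ofReal (pow_le_pow_left₀ hη.le (le_of_lt hω) 2)
  calc μ {ω | η < |f ω|}
      ≤ (∫⁻ ω, ENNReal.ofReal (f ω ^ 2) ∂μ) / ENNReal.ofReal (η ^ 2) :=
        (measure_mono hsub).trans <| meas_ge_le_lintegral_div hf.aemeasurable.ennreal_ofReal
          (by positivity) ENNReal.ofReal_ne_top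
    _ = ENNReal.ofReal ((∫ ω, f ω ^ 2 ∂μ) / η ^ 2) := by
        rw [← ofReal_integral_eq_lintegral_ofReal hf (ae_of_all _ fun ω => sq_nonneg (f ω)),
          ENNReal.ofReal_div_of_pos (by positivity)]

theorem wlln_exchangeable_triangular_array_general
    {Ω : ℕ → Type*} [∀ n, MeasurableSpace (Ω n)]
    (P : ∀ n, Measure (Ω n))
    (k : ℕ → ℕ)
    (X : ∀ n, Fin (k n) → Ω n → ℝ)
    -- square integrability with uniformly bounded second moment
    (hL2 : ∀ n i, MemLp (X n i) 2 (P n))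
    (Γ : ℝ) (hΓ : ∀ n i, ∫ ω, (X n i ω) ^ 2 ∂(P n) ≤ Γ)
    -- common cross-moment ρₙ = E[X_{i,n} X_{j,n}] for i ≠ j
    (ρ : ℕ → ℝ)
    (hρ : ∀ n (i j : Fin (k n)), i ≠ j → ∫ ω, X n i ω * X n j ω ∂(P n) = ρ n)
    -- the weights
    (a : ∀ n, Fin (k n) → ℝ)
    (ha1 : Tendsto (fun n : ℕ => ∑ i, (a n i) ^ 2) atTop (nhds 0))
    (ha2 : Tendsto (fun n : ℕ => |ρ n| * (∑ i, |a n i|) ^ 2) atTop (nhds 0)) :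
    ∀ η > (0 : ℝ),
      Tendsto (fun n : ℕ => P n {ω | η < |∑ i, a n i * X n i ω|}) atTop (nhds 0) := by
  intro η hη
  set B : ℕ → ℝ := fun n => Γ * ∑ i, a n i ^ 2 + 2 * (|ρ n| * (∑ i, |a n i|) ^ 2)
  have hchebyshev : ∀ n, P n {ω | η < |∑ i, a n i * X n i ω|} ≤ ENNReal.ofReal (B n / η ^ 2) :=
    fun n => (measure_lt_abs_le_ofReal_integral_sq_div
      (memLp_finsetSum _ fun i _ => (hL2 n i).const_mul (a n i)).integrable_sq hη).trans <|
      ENNReal.ofReal_le_ofReal <| div_le_div_of_nonneg_right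
        (integral_sq_sum_mul_le (hL2 n) (hΓ n) (hρ n) (a n)) (sq_nonneg η)
  have hB : Tendsto B atTop (nhds 0) := by
    simpa using (ha1.const_mul Γ).add (ha2.const_mul 2)
  have hbound : Tendsto (fun n => ENNReal.ofReal (B n / η ^ 2)) atTop (nhds 0) := by
    simpa using ENNReal.tendsto_ofReal (hB.div_const (η ^ 2))
  exact tendsto_of_tendsto_of_tendsto_of_le_of_le tendsto_const_nhds hbound
    (fun _ => zero_le) hchebyshev

/-- weak law of large numbers for triangular arrays of row-wise exchangeable
square-integrable random variables. -/
theorem wlln_exchangeable_triangular_array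
    {Ω : ℕ → Type*} [∀ n, MeasurableSpace (Ω n)]
    (P : ∀ n, Measure (Ω n)) (hP : ∀ n, IsProbabilityMeasure (P n))
    (k : ℕ → ℕ) (hk : Tendsto k atTop atTop)
    (X : ∀ n, Fin (k n) → Ω n → ℝ)
    (hmeas : ∀ n i, Measurable (X n i))
    -- row-wise exchangeability
    (hexch : ∀ n (σ : Equiv.Perm (Fin (k n))),
      Measure.map (fun ω => fun i => X n (σ i) ω) (P n) =
        Measure.map (fun ω => fun i => X n i ω) (P n))
    -- square integrability with uniformly bounded second moment
    (hL2 : ∀ n i, MemLp (X n i) 2 (P n))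
    (Γ : ℝ) (hΓ : ∀ n i, ∫ ω, (X n i ω) ^ 2 ∂(P n) ≤ Γ)
    -- common cross-moment ρₙ = E[X_{i,n} X_{j,n}] for i ≠ j
    (ρ : ℕ → ℝ)
    (hρ : ∀ n (i j : Fin (k n)), i ≠ j → ∫ ω, X n i ω * X n j ω ∂(P n) = ρ n)
    -- the weights
    (a : ∀ n, Fin (k n) → ℝ)
    (ha1 : Tendsto (fun n : ℕ => ∑ i, (a n i) ^ 2) atTop (nhds 0))
    (ha2 : Tendsto (fun n : ℕ => |ρ n| * (∑ i, |a n i|) ^ 2) atTop (nhds 0)) :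
    ∀ η > (0 : ℝ),
      Tendsto (fun n : ℕ => P n {ω | η < |∑ i, a n i * X n i ω|}) atTop (nhds 0) :=
  wlln_exchangeable_triangular_array_general P k X hL2 Γ hΓ ρ hρ a ha1 ha2
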